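/- If every team in a league outcome with n teams has total points exactly 2(n−1), then every match of the outcome ends in a draw. -/

import Mathlib

open Finset

inductive MatchResult : Type
  | homeWin : MatchResult
  | draw : MatchResult
  | awayWin : MatchResult
  deriving DecidableEq

instance : Fintype MatchResult :=
  ⟨{MatchResult.homeWin, MatchResult.draw, MatchResult.awayWin}, by
    intro x; cases x <;> first | decide | simp⟩

/-- A league outcome: a result for each ordered pair of distinct teams
(the first component is the home team). -/
abbrev LeagueOutcome (n : ℕ) : Type :=
  {p : Fin n × Fin n // p.1 ≠ p.2} → MatchResult

/-- Points earned by the home team. -/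
def homePts : MatchResult → ℕ
  | .homeWin => 3
  | .draw => 1
  | .awayWin => 0

/-- Points earned by the away team. -/
def awayPts : MatchResult → ℕ
  | .homeWin => 0
  | .draw => 1
  | .awayWin => 3

/-- Total points of team `i`: sum over all matches of the points `i` earns in them. -/
def totalPoints {n : ℕ} (r : LeagueOutcome n) (i : Fin n) : ℕ :=
  ∑ m : {p : Fin n × Fin n // p.1 ≠ p.2},
    ((if m.val.1 = i then homePts (r m) else 0) +
     (if m.val.2 = i then awayPts (r m) else 0))

/-- Total points the other teams earn in their matches against team `i`. -/
def oppPoints {n : ℕ} (r : LeagueOutcome n) (i : Fin n) : ℕ :=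
  ∑ m : {p : Fin n × Fin n // p.1 ≠ p.2},
    ((if m.val.1 = i then awayPts (r m) else 0) +
     (if m.val.2 = i then homePts (r m) else 0))

/-- Number of matches that team `i` wins. -/
def wins {n : ℕ} (r : LeagueOutcome n) (i : Fin n) : ℕ :=
  (Finset.univ.filter (fun m : {p : Fin n × Fin n // p.1 ≠ p.2} =>
    (m.val.1 = i ∧ r m = .homeWin) ∨ (m.val.2 = i ∧ r m = .awayWin))).card

/-- Number of matches that team `i` draws. -/
def draws {n : ℕ} (r : LeagueOutcome n) (i : Fin n) : ℕ :=
  (Finset.univ.filter (fun m : {p : Fin n × Fin n // p.1 ≠ p.2} =>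
    (m.val.1 = i ∨ m.val.2 = i) ∧ r m = .draw)).card

/-- Number of matches that team `i` loses. -/
def losses {n : ℕ} (r : LeagueOutcome n) (i : Fin n) : ℕ :=
  (Finset.univ.filter (fun m : {p : Fin n × Fin n // p.1 ≠ p.2} =>
    (m.val.1 = i ∧ r m = .awayWin) ∨ (m.val.2 = i ∧ r m = .homeWin))).card

/-! Every match hands out at least 2 points in total, and exactly 2 only when it is drawn. If all
`n` teams score `2(n−1)`, the `n(n−1)` matches hand out `2n(n−1)` points altogether, i.e. exactly 2
each, so none of them can have a winner. -/

lemma card_subtype_fst_ne_snd (α : Type*) [Fintype α] [DecidableEq α] :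
    Fintype.card {p : α × α // p.1 ≠ p.2} = Fintype.card α * (Fintype.card α - 1) := by
  have : (univ : Finset (α × α)).filter (fun p => p.1 ≠ p.2) = univ.offDiag := by
    ext; simp
  rw [Fintype.card_subtype, this, offDiag_card, card_univ, Nat.mul_sub_one]

lemma two_le_homePts_add_awayPts (x : MatchResult) : 2 ≤ homePts x + awayPts x := by
  cases x <;> decide

lemma homePts_add_awayPts_eq_two_iff {x : MatchResult} :
    homePts x + awayPts x = 2 ↔ x = .draw := by
  cases x <;> decide

lemma sum_totalPoints {n : ℕ} (r : LeagueOutcome n) :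
    ∑ i, totalPoints r i = ∑ m, (homePts (r m) + awayPts (r m)) := by
  unfold totalPoints
  rw [sum_comm]
  refine sum_congr rfl fun m _ => ?_
  simp only [sum_add_distrib, Fintype.sum_ite_eq]

theorem all_draws_of_min_score (n : ℕ) (r : LeagueOutcome n)
    (h : ∀ i, totalPoints r i = 2 * (n - 1)) :
    ∀ m, r m = MatchResult.draw := by
  have htotal : ∑ _m : {p : Fin n × Fin n // p.1 ≠ p.2}, 2 =
      ∑ m, (homePts (r m) + awayPts (r m)) := by
    simp only [← sum_totalPoints, h, sum_const, card_univ, card_subtype_fst_ne_snd,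
      Fintype.card_fin, smul_eq_mul]
    ring
  intro m
  rw [← homePts_add_awayPts_eq_two_iff]
  exact ((sum_eq_sum_iff_of_le fun m _ => two_le_homePts_add_awayPts (r m)).mp htotal m
    (mem_univ m)).symm
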